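/- Let S be a subalgebra of ℂ^{M×M} and let φ : A^{M×M} → L(Y^M) be an (S,S*)-bimodule map admitting a Hermitian Stinespring representation: φ(P) = V(π(P)J)V* for all P ∈ A^{M×M}, where π : A^{M×M} → L(X) is a unital *-representation on a Hilbert space X, V ∈ L(X, Y^M), and J ∈ L(X) satisfies J = J* = J^{-1} and Jπ(P) = π(P)J for all P. Then the subspace span_{β ∈ S} Ran(π(β*·1_A)V* − V*L_{β*}) of X is J-isotropic; that is, for all β, β' ∈ S and y, y' ∈ Y^M, ⟨J(π(β*·1_A)V* − V*L_{β*})y, (π(β'*·1_A)V* − V*L_{β'*})y'⟩ = 0. -/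

import Mathlib

open scoped ComplexOrder Matrix

noncomputable section

namespace NCK

/-! ## Actions of scalar complex matrices on matrices over a `ℂ`-module -/

/-- Left action `α · Z` of a complex scalar matrix on a matrix over a `ℂ`-module. -/
def cMul {p q r : Type*} [Fintype q] {M : Type*} [AddCommMonoid M] [Module ℂ M]
    (α : Matrix p q ℂ) (Z : Matrix q r M) : Matrix p r M :=
  Matrix.of fun i k => ∑ j, α i j • Z j k

/-- Right action `Z · α` of a complex scalar matrix on a matrix over a `ℂ`-module. -/
def mulC {p q r : Type*} [Fintype q] {M : Type*} [AddCommMonoid M] [Module ℂ M]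
    (Z : Matrix p q M) (α : Matrix q r ℂ) : Matrix p r M :=
  Matrix.of fun i k => ∑ j, α j k • Z i j

/-- The sandwich `α · P · βᴴ`. -/
def sandwich {p q p' q' : Type*} [Fintype p] [Fintype q] {M : Type*} [AddCommMonoid M]
    [Module ℂ M] (α : Matrix p' p ℂ) (P : Matrix p q M) (β : Matrix q' q ℂ) :
    Matrix p' q' M :=
  mulC (cMul α P) βᴴ

/-- A scalar complex matrix viewed as a matrix over the algebra `A`, i.e. `α ⊗ 1_A`. -/
def matC {p q : Type*} (A : Type*) [Semiring A] [Algebra ℂ A] (α : Matrix p q ℂ) :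
    Matrix p q A :=
  α.map (algebraMap ℂ A)

/-! ## Positivity and norm bounds for matrices over `*`-rings and for operator matrices -/

/-- Positivity of a square matrix over a `*`-ring, via factorization `Q = Cᴴ * C`
(the standard characterization of positivity in a matrix `C⋆`-algebra). -/
def MatPos {n : Type*} [Fintype n] {R : Type*} [NonUnitalSemiring R] [StarRing R]
    (Q : Matrix n n R) : Prop :=
  ∃ C : Matrix n n R, Q = Cᴴ * C

/-- `‖Q‖ ≤ c` for a matrix over a unital `*`-algebra, expressed as positivity of
`c² • 1 - Qᴴ * Q`. -/
def MatNormLe {n : Type*} [Fintype n] [DecidableEq n] {R : Type*} [Ring R] [StarRing R]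
    [Algebra ℂ R] (Q : Matrix n n R) (c : ℝ) : Prop :=
  MatPos ((((c : ℂ) ^ 2) • (1 : Matrix n n R)) - Qᴴ * Q)

/-- Positivity of an element of a `C⋆`-algebra, via factorization `x = (star c) * c`. -/
def elemPos {R : Type*} [Mul R] [Star R] (x : R) : Prop :=
  ∃ c : R, x = star c * c

variable {Y : Type*} [NormedAddCommGroup Y] [InnerProductSpace ℂ Y]

/-- Positivity of a square matrix of Hilbert-space operators, via the quadratic form. -/
def OpMatPos {n : Type*} [Fintype n] (T : Matrix n n (Y →L[ℂ] Y)) : Prop :=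
  ∀ y : n → Y, 0 ≤ ∑ i, ∑ j, (inner ℂ (y i) (T i j (y j)) : ℂ)

/-- Positivity of a doubly indexed (block) matrix of Hilbert-space operators. -/
def OpMatPos2 {k n : Type*} [Fintype k] [Fintype n]
    (T : Matrix k k (Matrix n n (Y →L[ℂ] Y))) : Prop :=
  ∀ y : k → n → Y, 0 ≤ ∑ i, ∑ j, ∑ a, ∑ b, (inner ℂ (y i a) (T i j a b (y j b)) : ℂ)

/-- `‖T‖ ≤ c` for a matrix of Hilbert-space operators. -/
def OpMatNormLe {p q : Type*} [Fintype p] [Fintype q]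
    (T : Matrix p q (Y →L[ℂ] Y)) (c : ℝ) : Prop :=
  ∀ y : q → Y, ∑ i, ‖∑ j, T i j (y j)‖ ^ 2 ≤ c ^ 2 * ∑ j, ‖y j‖ ^ 2

/-- `‖T‖ ≤ c` for a doubly indexed (block) matrix of Hilbert-space operators. -/
def OpMatNormLe2 {k n : Type*} [Fintype k] [Fintype n]
    (T : Matrix k k (Matrix n n (Y →L[ℂ] Y))) (c : ℝ) : Prop :=
  ∀ y : k → n → Y,
    ∑ i, ∑ a, ‖∑ j, ∑ b, T i j a b (y j b)‖ ^ 2 ≤ c ^ 2 * ∑ j, ∑ b, ‖y j b‖ ^ 2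

/-! ## Completely positive / completely bounded / bimodule maps on matrix algebras -/

/-- A map `φ : A^{ι×ι} → L(Y)^{ι×ι} (≅ L(Y^ι))` is completely positive if all its matrix
amplifications map positive elements to positive elements. -/
def IsCPMap {A : Type*} [NonUnitalSemiring A] [StarRing A] {ι : Type*} [Fintype ι]
    (φ : Matrix ι ι A → Matrix ι ι (Y →L[ℂ] Y)) : Prop :=
  ∀ (k : ℕ) (Q : Matrix (Fin k) (Fin k) (Matrix ι ι A)),
    MatPos Q → OpMatPos2 (Matrix.of fun i j => φ (Q i j))

/-- A map `φ : A^{ι×ι} → L(Y)^{ι×ι} (≅ L(Y^ι))` is completely bounded if the norms of its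
matrix amplifications are uniformly bounded. -/
def IsCBMap {A : Type*} [Ring A] [StarRing A] [Algebra ℂ A] {ι : Type*} [Fintype ι]
    [DecidableEq ι] (φ : Matrix ι ι A → Matrix ι ι (Y →L[ℂ] Y)) : Prop :=
  ∃ c : ℝ, ∀ (k : ℕ) (Q : Matrix (Fin k) (Fin k) (Matrix ι ι A)),
    MatNormLe Q 1 → OpMatNormLe2 (Matrix.of fun i j => φ (Q i j)) c

/-- `φ` is an `(S, S^*)`-bimodule map: `φ (α · P · β^*) = L_α (φ P) L_{β^*}` for `α, β ∈ S`. -/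
def IsBimod {ι : Type*} [Fintype ι] {A B : Type*} [AddCommMonoid A] [Module ℂ A]
    [AddCommMonoid B] [Module ℂ B] (S : Set (Matrix ι ι ℂ))
    (φ : Matrix ι ι A → Matrix ι ι B) : Prop :=
  ∀ α ∈ S, ∀ β ∈ S, ∀ P, φ (sandwich α P β) = sandwich α (φ P) β

/-! ## Noncommutative sets, functions and kernels -/

/-- A subset of the noncommutative space `V_nc`, given levelwise. -/
abbrev NCSet (V : Type*) := ∀ n : ℕ, Set (Matrix (Fin n) (Fin n) V)

/-- The type of graded kernels on all of `V_nc` with values in `L(A_nc, B_nc)`;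
a kernel "on `Ω`" is such a family, with all conditions imposed only at points of `Ω`. -/
abbrev KernelFam (V A B : Type*) :=
  ∀ n m : ℕ, Matrix (Fin n) (Fin n) V → Matrix (Fin m) (Fin m) V →
    (Matrix (Fin n) (Fin m) A → Matrix (Fin n) (Fin m) B)

/-- A graded kernel assigns a *linear* map `K(Z,W) : A^{n×m} → B^{n×m}` to points of `Ω`. -/
def GradedLinearOn {V A B : Type*} [AddCommMonoid A] [Module ℂ A] [AddCommMonoid B]
    [Module ℂ B] (Ω : NCSet V) (K : KernelFam V A B) : Prop :=
  ∀ n m Z W, Z ∈ Ω n → W ∈ Ω m → IsLinearMap ℂ (K n m Z W)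

/-- `K` respects intertwinings at points of `Ω`: whenever `α Z = Z' α` and `β W = W' β`,
`α K(Z,W)(P) β^* = K(Z',W')(α P β^*)`. -/
def IsNCKernelOn {V : Type*} [AddCommMonoid V] [Module ℂ V] {A B : Type*}
    [AddCommMonoid A] [Module ℂ A] [AddCommMonoid B] [Module ℂ B]
    (Ω : NCSet V) (K : KernelFam V A B) : Prop :=
  ∀ (n n' m m' : ℕ) (Z : Matrix (Fin n) (Fin n) V) (Z' : Matrix (Fin n') (Fin n') V)
    (W : Matrix (Fin m) (Fin m) V) (W' : Matrix (Fin m') (Fin m') V),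
    Z ∈ Ω n → Z' ∈ Ω n' → W ∈ Ω m → W' ∈ Ω m' →
    ∀ (α : Matrix (Fin n') (Fin n) ℂ) (β : Matrix (Fin m') (Fin m) ℂ),
      cMul α Z = mulC Z' α → cMul β W = mulC W' β →
      ∀ P, sandwich α (K n m Z W P) β = K n' m' Z' W' (sandwich α P β)

/-- `K` is Hermitian on `Ω`: `K(W,Z)(P^*) = (K(Z,W)(P))^*`. -/
def IsHermitianOn {V A B : Type*} [Star A] [Star B] (Ω : NCSet V) (K : KernelFam V A B) :
    Prop :=
  ∀ n m Z W, Z ∈ Ω n → W ∈ Ω m → ∀ P : Matrix (Fin n) (Fin m) A,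
    K m n W Z Pᴴ = (K n m Z W P)ᴴ

/-- The complete positivity condition for a kernel with values in `L(A_nc, L(Y)_nc)`,
in the Hilbert-space (quadratic form) formulation. -/
def IsCPOnH {V : Type*} {A : Type*} [NonUnitalSemiring A] [StarRing A]
    (Ω : NCSet V) (K : KernelFam V A (Y →L[ℂ] Y)) : Prop :=
  ∀ (L : ℕ) (ns : Fin L → ℕ) (Z : ∀ l, Matrix (Fin (ns l)) (Fin (ns l)) V),
    (∀ l, Z l ∈ Ω (ns l)) →
    ∀ (P : ∀ l, Matrix (Fin (ns l)) (Fin 1) A) (y : ∀ l, Fin (ns l) → Y),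
      0 ≤ ∑ l, ∑ l', ∑ a, ∑ b,
        (inner ℂ (y l a) (K (ns l) (ns l') (Z l) (Z l') (P l * (P l')ᴴ) a b (y l' b)) : ℂ)

/-- The complete positivity condition for a kernel with values in `L(A_nc, B_nc)`,
`B` a `C⋆`-algebra, in the `C⋆`-algebraic formulation. -/
def IsCPOnC {V : Type*} {A B : Type*} [NonUnitalSemiring A] [StarRing A]
    [NonUnitalSemiring B] [StarRing B] (Ω : NCSet V) (K : KernelFam V A B) : Prop :=
  ∀ (L : ℕ) (ns : Fin L → ℕ) (Z : ∀ l, Matrix (Fin (ns l)) (Fin (ns l)) V),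
    (∀ l, Z l ∈ Ω (ns l)) →
    ∀ (a : ∀ l, Matrix (Fin (ns l)) (Fin 1) A) (b : ∀ l, Matrix (Fin (ns l)) (Fin 1) B),
      elemPos (∑ l, ∑ l',
        ((b l)ᴴ * (K (ns l) (ns l') (Z l) (Z l') (a l * (a l')ᴴ)) * b l') 0 0)

/-- Completely positive noncommutative kernel on `Ω` (Hilbert-space-valued version). -/
def IsCPNCKernelOnH {V : Type*} [AddCommMonoid V] [Module ℂ V] {A : Type*}
    [NonUnitalSemiring A] [StarRing A] [Module ℂ A] (Ω : NCSet V)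
    (K : KernelFam V A (Y →L[ℂ] Y)) : Prop :=
  GradedLinearOn Ω K ∧ IsNCKernelOn Ω K ∧ IsCPOnH Ω K

/-- Completely positive noncommutative kernel on `Ω` (`C⋆`-algebra-valued version). -/
def IsCPNCKernelOnC {V : Type*} [AddCommMonoid V] [Module ℂ V] {A B : Type*}
    [NonUnitalSemiring A] [StarRing A] [Module ℂ A]
    [NonUnitalSemiring B] [StarRing B] [Module ℂ B] (Ω : NCSet V)
    (K : KernelFam V A B) : Prop :=
  GradedLinearOn Ω K ∧ IsNCKernelOn Ω K ∧ IsCPOnC Ω K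

/-- Noncommutative function `H` on `Ω` with values in `W_nc`:
graded, and `Z α = α Z'` implies `H(Z) (α ⊗ 1) = (α ⊗ 1) H(Z')`. -/
def IsNCFunOn {V W : Type*} [AddCommMonoid V] [Module ℂ V] [AddCommMonoid W] [Module ℂ W]
    (Ω : NCSet V) (H : ∀ n, Matrix (Fin n) (Fin n) V → Matrix (Fin n) (Fin n) W) : Prop :=
  ∀ (n m : ℕ) (Z : Matrix (Fin n) (Fin n) V) (Z' : Matrix (Fin m) (Fin m) V),
    Z ∈ Ω n → Z' ∈ Ω m → ∀ α : Matrix (Fin n) (Fin m) ℂ,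
      mulC Z α = cMul α Z' → mulC (H n Z) α = cMul α (H m Z')

/-! ## Kernels on a finite (indexed) set of points -/

/-- Kernels on a finite set of points `Z i`, `i : Fin Np`, of sizes `d i`. -/
abbrev KernelIx {Np : ℕ} (d : Fin Np → ℕ) (A B : Type*) :=
  ∀ i j : Fin Np, Matrix (Fin (d i)) (Fin (d j)) A → Matrix (Fin (d i)) (Fin (d j)) B

/-- Each value `K(Z_i, Z_j)` is a linear map. -/
def GradedLinearIx {Np : ℕ} {d : Fin Np → ℕ} {A B : Type*} [AddCommMonoid A] [Module ℂ A]
    [AddCommMonoid B] [Module ℂ B] (K : KernelIx d A B) : Prop :=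
  ∀ i j, IsLinearMap ℂ (K i j)

/-- The respects-intertwinings condition for a kernel on the finite set of points `Z`. -/
def IsNCKernelIx {V : Type*} [AddCommMonoid V] [Module ℂ V] {Np : ℕ} {d : Fin Np → ℕ}
    {A B : Type*} [AddCommMonoid A] [Module ℂ A] [AddCommMonoid B] [Module ℂ B]
    (Z : ∀ i, Matrix (Fin (d i)) (Fin (d i)) V) (K : KernelIx d A B) : Prop :=
  ∀ (i i' j j' : Fin Np) (α : Matrix (Fin (d i')) (Fin (d i)) ℂ)
    (β : Matrix (Fin (d j')) (Fin (d j)) ℂ),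
    cMul α (Z i) = mulC (Z i') α → cMul β (Z j) = mulC (Z j') β →
    ∀ P, sandwich α (K i j P) β = K i' j' (sandwich α P β)

/-- `K(Z_j, Z_i)(P^*) = (K(Z_i, Z_j)(P))^*`. -/
def IsHermitianIx {Np : ℕ} {d : Fin Np → ℕ} {A B : Type*} [Star A] [Star B]
    (K : KernelIx d A B) : Prop :=
  ∀ i j (P : Matrix (Fin (d i)) (Fin (d j)) A), K j i Pᴴ = (K i j P)ᴴ

/-- Complete positivity condition, Hilbert-space version, finite set of points. -/
def IsCPIxH {Np : ℕ} {d : Fin Np → ℕ} {A : Type*} [NonUnitalSemiring A] [StarRing A]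
    (K : KernelIx d A (Y →L[ℂ] Y)) : Prop :=
  ∀ (L : ℕ) (f : Fin L → Fin Np) (P : ∀ l, Matrix (Fin (d (f l))) (Fin 1) A)
    (y : ∀ l, Fin (d (f l)) → Y),
    0 ≤ ∑ l, ∑ l', ∑ a, ∑ b,
      (inner ℂ (y l a) (K (f l) (f l') (P l * (P l')ᴴ) a b (y l' b)) : ℂ)

/-- Complete positivity condition, `C⋆`-algebraic version, finite set of points. -/
def IsCPIxC {Np : ℕ} {d : Fin Np → ℕ} {A B : Type*} [NonUnitalSemiring A] [StarRing A]
    [NonUnitalSemiring B] [StarRing B] (K : KernelIx d A B) : Prop :=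
  ∀ (L : ℕ) (f : Fin L → Fin Np) (a : ∀ l, Matrix (Fin (d (f l))) (Fin 1) A)
    (b : ∀ l, Matrix (Fin (d (f l))) (Fin 1) B),
    elemPos (∑ l, ∑ l', ((b l)ᴴ * (K (f l) (f l') (a l * (a l')ᴴ)) * b l') 0 0)

/-- Completely positive nc kernel on a finite set of points (Hilbert version). -/
def IsCPNCKernelIxH {V : Type*} [AddCommMonoid V] [Module ℂ V] {Np : ℕ} {d : Fin Np → ℕ}
    {A : Type*} [NonUnitalSemiring A] [StarRing A] [Module ℂ A]
    (Z : ∀ i, Matrix (Fin (d i)) (Fin (d i)) V) (K : KernelIx d A (Y →L[ℂ] Y)) : Prop :=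
  GradedLinearIx K ∧ IsNCKernelIx Z K ∧ IsCPIxH K

/-- Completely positive nc kernel on a finite set of points (`C⋆` version). -/
def IsCPNCKernelIxC {V : Type*} [AddCommMonoid V] [Module ℂ V] {Np : ℕ} {d : Fin Np → ℕ}
    {A B : Type*} [NonUnitalSemiring A] [StarRing A] [Module ℂ A]
    [NonUnitalSemiring B] [StarRing B] [Module ℂ B]
    (Z : ∀ i, Matrix (Fin (d i)) (Fin (d i)) V) (K : KernelIx d A B) : Prop :=
  GradedLinearIx K ∧ IsNCKernelIx Z K ∧ IsCPIxC K

/-! ## The block-matrix encoding of a kernel on a finite set of points -/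

/-- The block index set for the direct sum point `Z^{(0)} = ⊕ᵢ Z_i`. -/
abbrev BIx {Np : ℕ} (d : Fin Np → ℕ) : Type := Σ i : Fin Np, Fin (d i)

/-- The direct sum `Z^{(0)} = ⊕ᵢ Z_i` of a finite family of nc points. -/
def dirSum {V : Type*} [Zero V] {Np : ℕ} {d : Fin Np → ℕ}
    (Z : ∀ i, Matrix (Fin (d i)) (Fin (d i)) V) : Matrix (BIx d) (BIx d) V :=
  Matrix.of fun x y =>
    if h : x.1 = y.1 then Z x.1 x.2 (Fin.cast (congrArg d h.symm) y.2) else 0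

/-- The intertwining algebra `S = {α : α Z^{(0)} = Z^{(0)} α}` of the direct-sum point. -/
def interAlg {V : Type*} [AddCommMonoid V] [Module ℂ V] {Np : ℕ} {d : Fin Np → ℕ}
    (Z : ∀ i, Matrix (Fin (d i)) (Fin (d i)) V) : Set (Matrix (BIx d) (BIx d) ℂ) :=
  {α | cMul α (dirSum Z) = mulC (dirSum Z) α}

/-- The block map `φ_K ([P_{ij}]) = [K(Z_i,Z_j)(P_{ij})]` associated with a kernel on a
finite set of points. -/
def phiK {Np : ℕ} {d : Fin Np → ℕ} {A B : Type*} (K : KernelIx d A B) :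
    Matrix (BIx d) (BIx d) A → Matrix (BIx d) (BIx d) B :=
  fun P => Matrix.of fun x y =>
    K x.1 y.1 (Matrix.of fun a b => P ⟨x.1, a⟩ ⟨y.1, b⟩) x.2 y.2

/-- The block map associated with a kernel and a finite tuple `f` of (indices of) points. -/
def phiKt {Np : ℕ} {d : Fin Np → ℕ} {A B : Type*} {L : ℕ} (f : Fin L → Fin Np)
    (K : KernelIx d A B) :
    Matrix (Σ l, Fin (d (f l))) (Σ l, Fin (d (f l))) A →
      Matrix (Σ l, Fin (d (f l))) (Σ l, Fin (d (f l))) B :=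
  fun P => Matrix.of fun x y =>
    K (f x.1) (f y.1) (Matrix.of fun a b => P ⟨x.1, a⟩ ⟨y.1, b⟩) x.2 y.2

/-- The block map associated with a general kernel and a finite tuple of points. -/
def phiKg {V A B : Type*} (K : KernelFam V A B) {L : ℕ} (ns : Fin L → ℕ)
    (Z : ∀ l, Matrix (Fin (ns l)) (Fin (ns l)) V) :
    Matrix (Σ l, Fin (ns l)) (Σ l, Fin (ns l)) A →
      Matrix (Σ l, Fin (ns l)) (Σ l, Fin (ns l)) B :=
  fun P => Matrix.of fun x y =>
    K (ns x.1) (ns y.1) (Z x.1) (Z y.1) (Matrix.of fun a b => P ⟨x.1, a⟩ ⟨y.1, b⟩) x.2 y.2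

/-! ## Full nc sets and envelopes -/

/-- Direct sum of two nc points. -/
def dsum2 {V : Type*} [Zero V] {n m : ℕ} (Z : Matrix (Fin n) (Fin n) V)
    (W : Matrix (Fin m) (Fin m) V) : Matrix (Fin (n + m)) (Fin (n + m)) V :=
  Matrix.of fun i j =>
    Sum.elim
      (fun a => Sum.elim (fun b => Z a b) (fun _ => (0 : V)) (finSumFinEquiv.symm j))
      (fun a => Sum.elim (fun _ => (0 : V)) (fun b => W a b) (finSumFinEquiv.symm j))
      (finSumFinEquiv.symm i)

/-- A full nc set: closed under direct sums and invariant under left injective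
intertwinings. -/
def IsFullNC {V : Type*} [AddCommMonoid V] [Module ℂ V] (Ξ : NCSet V) : Prop :=
  (∀ (n m : ℕ) (Z : Matrix (Fin n) (Fin n) V) (W : Matrix (Fin m) (Fin m) V),
      Z ∈ Ξ n → W ∈ Ξ m → dsum2 Z W ∈ Ξ (n + m)) ∧
  (∀ (n m : ℕ) (Z : Matrix (Fin n) (Fin n) V) (Z' : Matrix (Fin m) (Fin m) V)
      (ι : Matrix (Fin n) (Fin m) ℂ), Z ∈ Ξ n → Function.Injective ι.mulVec →
      cMul ι Z' = mulC Z ι → Z' ∈ Ξ m)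

/-- The full nc envelope of a subset `Ω` of `V_nc`. -/
def fullEnvelope {V : Type*} [AddCommMonoid V] [Module ℂ V] (Ω : NCSet V) : NCSet V :=
  fun n => {Z | ∀ Ξ : NCSet V, IsFullNC Ξ → (∀ k, Ω k ⊆ Ξ k) → Z ∈ Ξ n}

/-! ## 2×2 operator blocks -/

/-- A `2 × 2` matrix of operators on `Y`, as an operator on `Y ⊕ Y` (ℓ²-sum). -/
def blk2 (T : Matrix (Fin 2) (Fin 2) (Y →L[ℂ] Y)) :
    (PiLp 2 fun _ : Fin 2 => Y) →L[ℂ] (PiLp 2 fun _ : Fin 2 => Y) :=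
  ((PiLp.continuousLinearEquiv 2 ℂ (fun _ : Fin 2 => Y)).symm.toContinuousLinearMap) ∘L
    ((ContinuousLinearMap.pi fun i => ∑ j, (T i j) ∘L (ContinuousLinearMap.proj j)) ∘L
      ((PiLp.continuousLinearEquiv 2 ℂ (fun _ : Fin 2 => Y)).toContinuousLinearMap))


/-- Complete positivity for a map `φ : A → L(Y)` defined on a `C⋆`-algebra `A`. -/
def IsCPMapE {A : Type*} [NonUnitalSemiring A] [StarRing A] (φ : A → (Y →L[ℂ] Y)) : Prop :=
  ∀ (k : ℕ) (Q : Matrix (Fin k) (Fin k) A), MatPos Q →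
    OpMatPos (Matrix.of fun i j => φ (Q i j))

/-- Complete boundedness for a map `φ : A → L(Y)` defined on a `C⋆`-algebra `A`. -/
def IsCBMapE {A : Type*} [Ring A] [StarRing A] [Algebra ℂ A] (φ : A → (Y →L[ℂ] Y)) : Prop :=
  ∃ c : ℝ, ∀ (k : ℕ) (Q : Matrix (Fin k) (Fin k) A),
    MatNormLe Q 1 → OpMatNormLe (Matrix.of fun i j => φ (Q i j)) c

/-- The strict positivity domain `ℙ_𝔔 = {Z ∈ Ξ : 𝔔(Z,Z)(I) ≻ 0}` of a kernel `𝔔` on `Ξ`. -/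
def posDom {V : Type*} {N : Type*} [NormedAddCommGroup N] [InnerProductSpace ℂ N]
    [CompleteSpace N] (Ξ : NCSet V) (Q : KernelFam V ℂ (N →L[ℂ] N)) : NCSet V :=
  fun n => {Z | Z ∈ Ξ n ∧ ∃ ε : ℝ, 0 < ε ∧
    MatPos (Q n n Z Z 1 - (ε : ℂ) • (1 : Matrix (Fin n) (Fin n) (N →L[ℂ] N)))}

/-!
For `γ, β ∈ S` the bimodule property gives
`V π(γβ^*) J V^* = L_γ φ(1) L_{β^*} = V π(γ) J V^* L_{β^*}`
(both sides are `φ` of a sandwich of `1`), so `V π(γ ⊗ 1_A) J` kills every vector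
`w = (π(β^* ⊗ 1_A) V^* - V^* L_{β^*}) y`. As `J` is self-adjoint,
`⟨J w, w'⟩ = ⟨w, J w'⟩ = ⟨y, V π(β ⊗ 1_A) J w'⟩ - ⟨L_{β^*} y, V J w'⟩`,
and both terms vanish by the previous fact with `γ = β` and `γ = 1`.
-/

section StinespringColumn

-- `α • y` is `L_α y` for `α : Matrix ι ι ℂ`, and `T • y` is the action of
-- `T ∈ L(Y)^{ι×ι} ≅ L(Y^ι)` on `y : ι → Y`.
open Matrix.Module

variable {ι : Type*} [Fintype ι] [DecidableEq ι]

omit [Fintype ι] in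
lemma matC_one {A : Type*} [Semiring A] [Algebra ℂ A] : matC A (1 : Matrix ι ι ℂ) = 1 :=
  Matrix.map_one _ (map_zero _) (map_one _)

omit [DecidableEq ι] in
lemma matC_mul {A : Type*} [Semiring A] [Algebra ℂ A] (α β : Matrix ι ι ℂ) :
    matC A (α * β) = matC A α * matC A β :=
  Matrix.map_mul

omit [Fintype ι] [DecidableEq ι] in
lemma matC_conjTranspose {A : Type*} [Semiring A] [StarRing A] [Algebra ℂ A]
    [StarModule ℂ A] (α : Matrix ι ι ℂ) : matC A αᴴ = (matC A α)ᴴ :=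
  Matrix.conjTranspose_map _ fun z => algebraMap_star_comm z

lemma sandwich_one {A : Type*} [Semiring A] [Algebra ℂ A] (α β : Matrix ι ι ℂ) :
    sandwich α (1 : Matrix ι ι A) β = matC A (α * βᴴ) := by
  ext i j
  simp [sandwich, cMul, mulC, matC, Matrix.mul_apply, Matrix.one_apply, smul_ite,
    Algebra.algebraMap_eq_smul_one, smul_smul, mul_comm]

lemma sandwich_smul {Y : Type*} [NormedAddCommGroup Y] [NormedSpace ℂ Y]
    (α β : Matrix ι ι ℂ) (T : Matrix ι ι (Y →L[ℂ] Y)) (y : ι → Y) :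
    sandwich α T β • y = α • T • βᴴ • y := by
  ext i
  simp only [sandwich, mulC, cMul, Matrix.conjTranspose_apply, RCLike.star_def,
    Matrix.of_apply, Finset.smul_sum, Matrix.Module.smul_apply, ContinuousLinearMap.smul_def,
    sum_apply, _root_.smul_apply, map_smul, smul_comm ((starRingEnd ℂ) (β _ _)) (α _ _)]
  rw [Finset.sum_comm_cycle]
  exact Finset.sum_congr rfl fun _ _ => Finset.sum_comm

variable {X Y : Type*} [NormedAddCommGroup X] [InnerProductSpace ℂ X] [CompleteSpace X]
  [NormedAddCommGroup Y] [InnerProductSpace ℂ Y] [CompleteSpace Y]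

/-- `V^* y` for the column `V = (V_i)_i : X → Y^ι`. Here `Y^ι` is `ι → Y`, which carries the
sup norm rather than the Hilbert-space norm, so `V^*` is written out instead of using `adjoint`. -/
def colAdjoint (V : ι → X →L[ℂ] Y) (y : ι → Y) : X :=
  ∑ i, ContinuousLinearMap.adjoint (V i) (y i)

omit [DecidableEq ι] in
lemma inner_colAdjoint_eq_zero {V : ι → X →L[ℂ] Y} {x : X}
    (hx : ContinuousLinearMap.pi V x = 0) (y : ι → Y) : inner ℂ (colAdjoint V y) x = 0 := by
  simp only [colAdjoint, sum_inner, ContinuousLinearMap.adjoint_inner_left]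
  exact Finset.sum_eq_zero fun i _ => by rw [← ContinuousLinearMap.pi_apply, hx]; simp

lemma colAdjoint_conjTranspose_smul (V : ι → X →L[ℂ] Y) (β : Matrix ι ι ℂ) (y : ι → Y) :
    colAdjoint V (βᴴ • y) =
      ∑ k, ∑ l, starRingEnd ℂ (β l k) • ContinuousLinearMap.adjoint (V k) (y l) := by
  simp only [colAdjoint, Matrix.Module.smul_apply, Matrix.conjTranspose_apply, map_sum,
    map_smul, RCLike.star_def]

lemma pi_apply_colAdjoint (V : ι → X →L[ℂ] Y) (R : X →L[ℂ] X) (y : ι → Y) :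
    ContinuousLinearMap.pi V (R (colAdjoint V y)) =
      (Matrix.of fun i j => V i ∘L R ∘L ContinuousLinearMap.adjoint (V j)) • y := by
  ext i
  simp [colAdjoint]

variable {A : Type*} [Ring A] [StarRing A] [Algebra ℂ A]
  {π : Matrix ι ι A →⋆ₐ[ℂ] (X →L[ℂ] X)} {V : ι → X →L[ℂ] Y} {J : X →L[ℂ] X}
  {φ : Matrix ι ι A → Matrix ι ι (Y →L[ℂ] Y)}

def intertwiningDefect (π : Matrix ι ι A →⋆ₐ[ℂ] (X →L[ℂ] X)) (V : ι → X →L[ℂ] Y)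
    (β : Matrix ι ι ℂ) (y : ι → Y) : X :=
  π (matC A βᴴ) (colAdjoint V y) - colAdjoint V (βᴴ • y)

lemma pi_apply_stinespring
    (hrep : ∀ P, φ P = Matrix.of fun i j =>
      V i ∘L (π P ∘L (J ∘L ContinuousLinearMap.adjoint (V j))))
    (P : Matrix ι ι A) (y : ι → Y) :
    ContinuousLinearMap.pi V (π P (J (colAdjoint V y))) = φ P • y := by
  rw [hrep]
  exact pi_apply_colAdjoint V (π P ∘L J) y

lemma pi_apply_stinespring_matC_mul {S : Set (Matrix ι ι ℂ)}
    (hrep : ∀ P, φ P = Matrix.of fun i j =>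
      V i ∘L (π P ∘L (J ∘L ContinuousLinearMap.adjoint (V j))))
    (hbm : IsBimod S φ) {γ β : Matrix ι ι ℂ} (hγ : γ ∈ S) (hβ : β ∈ S) (y : ι → Y) :
    ContinuousLinearMap.pi V (π (matC A (γ * βᴴ)) (J (colAdjoint V y))) = γ • φ 1 • βᴴ • y := by
  rw [pi_apply_stinespring hrep, ← sandwich_one, hbm γ hγ β hβ, sandwich_smul]

lemma pi_apply_matC_J_intertwiningDefect {S : Set (Matrix ι ι ℂ)}
    (hJπ : ∀ P, J ∘L π P = π P ∘L J)
    (hrep : ∀ P, φ P = Matrix.of fun i j =>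
      V i ∘L (π P ∘L (J ∘L ContinuousLinearMap.adjoint (V j))))
    (hbm : IsBimod S φ) (hS : 1 ∈ S) {γ β : Matrix ι ι ℂ} (hγ : γ ∈ S) (hβ : β ∈ S)
    (y : ι → Y) :
    ContinuousLinearMap.pi V (π (matC A γ) (J (intertwiningDefect π V β y))) = 0 := by
  have hJ : J (π (matC A βᴴ) (colAdjoint V y)) = π (matC A βᴴ) (J (colAdjoint V y)) :=
    congr($(hJπ _) _)
  have hmul : π (matC A γ) (π (matC A βᴴ) (J (colAdjoint V y))) =
      π (matC A (γ * βᴴ)) (J (colAdjoint V y)) := by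
    rw [matC_mul, map_mul]; rfl
  have hγ_one : matC A γ = matC A (γ * (1 : Matrix ι ι ℂ)ᴴ) := by
    rw [Matrix.conjTranspose_one, mul_one]
  rw [intertwiningDefect, map_sub, map_sub, map_sub, hJ, hmul, hγ_one,
    pi_apply_stinespring_matC_mul hrep hbm hγ hβ, pi_apply_stinespring_matC_mul hrep hbm hγ hS,
    Matrix.conjTranspose_one, one_smul, sub_self]

variable [StarModule ℂ A] in
lemma inner_J_intertwiningDefect_eq_zero {S : Set (Matrix ι ι ℂ)} (hJ : IsSelfAdjoint J)
    (hJπ : ∀ P, J ∘L π P = π P ∘L J)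
    (hrep : ∀ P, φ P = Matrix.of fun i j =>
      V i ∘L (π P ∘L (J ∘L ContinuousLinearMap.adjoint (V j))))
    (hbm : IsBimod S φ) (hS : 1 ∈ S) {β β' : Matrix ι ι ℂ} (hβ : β ∈ S) (hβ' : β' ∈ S)
    (y y' : ι → Y) :
    inner ℂ (J (intertwiningDefect π V β y)) (intertwiningDefect π V β' y') = 0 := by
  have hker : ∀ γ ∈ S,
      ContinuousLinearMap.pi V (π (matC A γ) (J (intertwiningDefect π V β' y'))) = 0 :=
    fun γ hγ => pi_apply_matC_J_intertwiningDefect hJπ hrep hbm hS hγ hβ' y'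
  have hker_one : ContinuousLinearMap.pi V (J (intertwiningDefect π V β' y')) = 0 := by
    simpa [matC_one] using hker 1 hS
  have hπ_adjoint : ContinuousLinearMap.adjoint (π (matC A βᴴ)) = π (matC A β) := by
    rw [← ContinuousLinearMap.star_eq_adjoint, ← map_star, matC_conjTranspose,
      Matrix.star_eq_conjTranspose, Matrix.conjTranspose_conjTranspose]
  rw [← ContinuousLinearMap.adjoint_inner_right, hJ.adjoint_eq, intertwiningDefect,
    inner_sub_left, ← ContinuousLinearMap.adjoint_inner_right, hπ_adjoint,
    inner_colAdjoint_eq_zero (hker β hβ), inner_colAdjoint_eq_zero hker_one, sub_zero]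

end StinespringColumn

theorem statement15_general {M : ℕ} (S : Subalgebra ℂ (Matrix (Fin M) (Fin M) ℂ))
    {A : Type*} [CStarAlgebra A]
    {Y : Type*} [NormedAddCommGroup Y] [InnerProductSpace ℂ Y] [CompleteSpace Y]
    {X : Type*} [NormedAddCommGroup X] [InnerProductSpace ℂ X] [CompleteSpace X]
    (π : Matrix (Fin M) (Fin M) A →⋆ₐ[ℂ] (X →L[ℂ] X)) (Vc : Fin M → (X →L[ℂ] Y))
    (J : X →L[ℂ] X) (hJstar : star J = J)
    (hJcomm : ∀ P, J ∘L (π P) = (π P) ∘L J)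
    (φ : Matrix (Fin M) (Fin M) A → Matrix (Fin M) (Fin M) (Y →L[ℂ] Y))
    (hrep : ∀ P, φ P = Matrix.of fun i j =>
      (Vc i) ∘L ((π P) ∘L (J ∘L (ContinuousLinearMap.adjoint (Vc j)))))
    (hbm : IsBimod (S : Set (Matrix (Fin M) (Fin M) ℂ)) φ) :
    ∀ β ∈ S, ∀ β' ∈ S, ∀ y y' : Fin M → Y,
      (inner ℂ
        (J ((π (matC A βᴴ)) (∑ j, ContinuousLinearMap.adjoint (Vc j) (y j)) -
          ∑ k, ∑ l, (starRingEnd ℂ) (β l k) • ContinuousLinearMap.adjoint (Vc k) (y l)))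
        ((π (matC A β'ᴴ)) (∑ j, ContinuousLinearMap.adjoint (Vc j) (y' j)) -
          ∑ k, ∑ l, (starRingEnd ℂ) (β' l k) • ContinuousLinearMap.adjoint (Vc k) (y' l))
        : ℂ) = 0 := by
  intro β hβ β' hβ' y y'
  have key := inner_J_intertwiningDefect_eq_zero hJstar hJcomm hrep hbm S.one_mem hβ hβ' y y'
  rwa [intertwiningDefect, intertwiningDefect, colAdjoint_conjTranspose_smul,
    colAdjoint_conjTranspose_smul] at key

/-- Theorem 3.10(2): if the `(S,S^*)`-bimodule map `φ` has a Hermitian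
Stinespring representation `φ(P) = V (π(P) J) V^*`, then the span of the ranges of the
operators `π(β^* ⊗ 1_A) V^* - V^* L_{β^*}` (`β ∈ S`) is a `J`-isotropic subspace of `X`:
all `J`-pairings between such vectors vanish. -/
theorem statement15 {M : ℕ} (S : Subalgebra ℂ (Matrix (Fin M) (Fin M) ℂ))
    {A : Type*} [CStarAlgebra A]
    {Y : Type*} [NormedAddCommGroup Y] [InnerProductSpace ℂ Y] [CompleteSpace Y]
    {X : Type*} [NormedAddCommGroup X] [InnerProductSpace ℂ X] [CompleteSpace X]
    (π : Matrix (Fin M) (Fin M) A →⋆ₐ[ℂ] (X →L[ℂ] X)) (Vc : Fin M → (X →L[ℂ] Y))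
    (J : X →L[ℂ] X) (hJstar : star J = J) (hJinv : J ∘L J = ContinuousLinearMap.id ℂ X)
    (hJcomm : ∀ P, J ∘L (π P) = (π P) ∘L J)
    (φ : Matrix (Fin M) (Fin M) A → Matrix (Fin M) (Fin M) (Y →L[ℂ] Y))
    (hrep : ∀ P, φ P = Matrix.of fun i j =>
      (Vc i) ∘L ((π P) ∘L (J ∘L (ContinuousLinearMap.adjoint (Vc j)))))
    (hbm : IsBimod (S : Set (Matrix (Fin M) (Fin M) ℂ)) φ) :
    ∀ β ∈ S, ∀ β' ∈ S, ∀ y y' : Fin M → Y,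
      (inner ℂ
        (J ((π (matC A βᴴ)) (∑ j, ContinuousLinearMap.adjoint (Vc j) (y j)) -
          ∑ k, ∑ l, (starRingEnd ℂ) (β l k) • ContinuousLinearMap.adjoint (Vc k) (y l)))
        ((π (matC A β'ᴴ)) (∑ j, ContinuousLinearMap.adjoint (Vc j) (y' j)) -
          ∑ k, ∑ l, (starRingEnd ℂ) (β' l k) • ContinuousLinearMap.adjoint (Vc k) (y' l))
        : ℂ) = 0 :=
  statement15_general S π Vc J hJstar hJcomm φ hrep hbm

end NCK

end
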